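/- arXiv:2405.11982 — 2 statements merged into one kernel-verified Lean document; each statement's English description precedes it below -/
import Mathlib

section
/- Let T_π be the adaptive adversarial Bellman operator for policy π with fixed point Q^π, and suppose π_new satisfies min_ā E_{a∼π_new}[Q^{π_old}(s,a,ā)] = max_{π∈Π} min_ā E_{a∼π}[Q^{π_old}(s,a,ā)] for every s. Then T_{π_new} Q^{π_old} ≥ T_{π_old} Q^{π_old} = Q^{π_old} pointwise, and therefore by monotonicity and contraction of T_{π_new}, Q^{π_new} = lim_n T_{π_new}ⁿ Q^{π_old} ≥ Q^{π_old} pointwise. -/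
/-!
Write `V_π Q s = min_b E_{a∼π(s)} Q(s,a,b)`; the operator `T_π` depends on `Q` only through
`V_π Q`, monotonically. Greediness of `π_new` gives `V_{π_old} Q^{π_old} ≤ V_{π_new} Q^{π_old}`,
hence `Q^{π_old} = T_{π_old} Q^{π_old} ≤ T_{π_new} Q^{π_old}`, and by monotonicity the iterates
`T_{π_new}ⁿ Q^{π_old}` increase. Since averaging and taking a minimum are `1`-Lipschitz for the sup
distance, `T_{π_new}` is a `γ`-contraction, so the iterates converge to its unique fixed point
`Q^{π_new}`, which therefore dominates `Q^{π_old}`.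
-/

open Filter Topology

section FiniteAverages

variable {ι : Type*} [Fintype ι] {w f g : ι → ℝ} {c : ℝ}

lemma sum_mul_le_of_forall_le (hw0 : ∀ i, 0 ≤ w i) (hw1 : ∑ i, w i = 1) (h : ∀ i, f i ≤ c) :
    ∑ i, w i * f i ≤ c :=
  calc ∑ i, w i * f i ≤ ∑ i, w i * c :=
        Finset.sum_le_sum fun i _ => mul_le_mul_of_nonneg_left (h i) (hw0 i)
    _ = c := by rw [← Finset.sum_mul, hw1, one_mul]

lemma dist_sum_mul_le (hw0 : ∀ i, 0 ≤ w i) (hw1 : ∑ i, w i = 1)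
    (h : ∀ i, dist (f i) (g i) ≤ c) : dist (∑ i, w i * f i) (∑ i, w i * g i) ≤ c := by
  rw [Real.dist_eq, abs_sub_le_iff, ← Finset.sum_sub_distrib, ← Finset.sum_sub_distrib]
  simp only [← mul_sub]
  exact ⟨sum_mul_le_of_forall_le hw0 hw1 fun i => (abs_sub_le_iff.1 (h i)).1,
    sum_mul_le_of_forall_le hw0 hw1 fun i => (abs_sub_le_iff.1 (h i)).2⟩

lemma ciInf_sub_ciInf_le [Nonempty ι] (h : ∀ i, f i - g i ≤ c) :
    (⨅ i, f i) - ⨅ i, g i ≤ c := by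
  rw [sub_le_comm]
  exact le_ciInf fun i => by linarith [ciInf_le (Set.finite_range f).bddBelow i, h i]

lemma dist_ciInf_le [Nonempty ι] (h : ∀ i, dist (f i) (g i) ≤ c) :
    dist (⨅ i, f i) (⨅ i, g i) ≤ c := by
  rw [Real.dist_eq, abs_sub_le_iff]
  exact ⟨ciInf_sub_ciInf_le fun i => (abs_sub_le_iff.1 (h i)).1,
    ciInf_sub_ciInf_le fun i => (abs_sub_le_iff.1 (h i)).2⟩

end FiniteAverages

section AdversarialBellman

variable {S A : Type*} [Fintype A]

def IsStochasticPolicy (π : S → A → ℝ) : Prop :=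
  ∀ s, (∀ a, 0 ≤ π s a) ∧ ∑ a, π s a = 1

noncomputable def worstCaseValue (π : S → A → ℝ) (Q : S → A → A → ℝ) (s : S) : ℝ :=
  ⨅ b, ∑ a, π s a * Q s a b

variable {π π' : S → A → ℝ}

lemma worstCaseValue_mono (hπ : ∀ s a, 0 ≤ π s a) : Monotone (worstCaseValue π) :=
  fun _ _ hQ s => ciInf_mono (Set.finite_range _).bddBelow fun b =>
    Finset.sum_le_sum fun a _ => mul_le_mul_of_nonneg_left (hQ s a b) (hπ s a)

variable [Fintype S]

noncomputable def advBellman (r : S → A → A → ℝ) (p : S → A → A → S → ℝ) (γ : ℝ)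
    (π : S → A → ℝ) (Q : S → A → A → ℝ) : S → A → A → ℝ :=
  fun s a b => r s a b + γ * ∑ s', p s a b s' * worstCaseValue π Q s'

variable {r : S → A → A → ℝ} {p : S → A → A → S → ℝ} {γ : ℝ}

lemma worstCaseValue_le_pi_norm [Nonempty A] (hπ : IsStochasticPolicy π) (Q : S → A → A → ℝ)
    (s : S) : worstCaseValue π Q s ≤ ‖Q‖ := by
  obtain ⟨b⟩ := ‹Nonempty A›
  refine (ciInf_le (Set.finite_range _).bddBelow b).trans <|
    sum_mul_le_of_forall_le (hπ s).1 (hπ s).2 fun a => ?_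
  calc Q s a b ≤ ‖Q s a b‖ := Real.le_norm_self _
    _ ≤ ‖Q‖ := ((norm_le_pi_norm (Q s a) b).trans (norm_le_pi_norm (Q s) a)).trans
        (norm_le_pi_norm Q s)

lemma worstCaseValue_le_iSup [Nonempty A] (hπ : IsStochasticPolicy π) (Q : S → A → A → ℝ)
    (s : S) : worstCaseValue π Q s ≤
      ⨆ σ : {σ : S → A → ℝ // IsStochasticPolicy σ}, worstCaseValue σ Q s :=
  le_ciSup (f := fun σ : {σ : S → A → ℝ // IsStochasticPolicy σ} => worstCaseValue σ Q s)
    ⟨‖Q‖, by rintro _ ⟨σ, rfl⟩; exact worstCaseValue_le_pi_norm σ.2 Q s⟩ ⟨π, hπ⟩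

lemma dist_worstCaseValue_le [Nonempty A] (hπ : IsStochasticPolicy π) (Q Q' : S → A → A → ℝ)
    (s : S) : dist (worstCaseValue π Q s) (worstCaseValue π Q' s) ≤ dist Q Q' :=
  dist_ciInf_le fun b => dist_sum_mul_le (hπ s).1 (hπ s).2 fun a =>
    ((dist_le_pi_dist (Q s a) (Q' s a) b).trans (dist_le_pi_dist (Q s) (Q' s) a)).trans
      (dist_le_pi_dist Q Q' s)

lemma advBellman_le_advBellman (hp0 : ∀ s a b s', 0 ≤ p s a b s') (hγ0 : 0 ≤ γ)
    {Q Q' : S → A → A → ℝ} (h : worstCaseValue π Q ≤ worstCaseValue π' Q') :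
    advBellman r p γ π Q ≤ advBellman r p γ π' Q' :=
  fun s a b => add_le_add_right (mul_le_mul_of_nonneg_left
    (Finset.sum_le_sum fun s' _ => mul_le_mul_of_nonneg_left (h s') (hp0 s a b s')) hγ0) _

lemma advBellman_mono (hp0 : ∀ s a b s', 0 ≤ p s a b s') (hγ0 : 0 ≤ γ)
    (hπ : ∀ s a, 0 ≤ π s a) : Monotone (advBellman r p γ π) :=
  fun _ _ hQ => advBellman_le_advBellman hp0 hγ0 (worstCaseValue_mono hπ hQ)

lemma lipschitzWith_advBellman [Nonempty A] (hp0 : ∀ s a b s', 0 ≤ p s a b s')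
    (hp1 : ∀ s a b, ∑ s', p s a b s' = 1) (hγ0 : 0 ≤ γ) (hπ : IsStochasticPolicy π) :
    LipschitzWith γ.toNNReal (advBellman r p γ π) := by
  refine LipschitzWith.of_dist_le_mul fun Q Q' => ?_
  rw [Real.coe_toNNReal _ hγ0]
  have hd : 0 ≤ γ * dist Q Q' := mul_nonneg hγ0 dist_nonneg
  refine (dist_pi_le_iff hd).2 fun s => (dist_pi_le_iff hd).2 fun a => (dist_pi_le_iff hd).2
    fun b => ?_
  rw [advBellman, advBellman, dist_add_left, Real.dist_eq, ← mul_sub, abs_mul,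
    abs_of_nonneg hγ0, ← Real.dist_eq]
  exact mul_le_mul_of_nonneg_left
    (dist_sum_mul_le (hp0 s a b) (hp1 s a b) fun s' => dist_worstCaseValue_le hπ Q Q' s') hγ0

end AdversarialBellman

theorem a2p_policy_improvement_general
    {S A : Type*} [Fintype S] [Fintype A] [Nonempty A]
    (r : S → A → A → ℝ) (p : S → A → A → S → ℝ)
    (hp0 : ∀ s a b s', 0 ≤ p s a b s') (hp1 : ∀ s a b, ∑ s', p s a b s' = 1)
    (γ : ℝ) (hγ0 : 0 ≤ γ) (hγ1 : γ < 1)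
    (T : (S → A → ℝ) → (S → A → A → ℝ) → (S → A → A → ℝ))
    (hT : ∀ (π : S → A → ℝ) (Q : S → A → A → ℝ) (s : S) (a b : A),
      T π Q s a b = r s a b +
        γ * ∑ s', p s a b s' * ⨅ b', ∑ a', π s' a' * Q s' a' b')
    (πold πnew : S → A → ℝ)
    (hπold : ∀ s, (∀ a, 0 ≤ πold s a) ∧ ∑ a, πold s a = 1)
    (hπnew : ∀ s, (∀ a, 0 ≤ πnew s a) ∧ ∑ a, πnew s a = 1)
    (Qold Qnew : S → A → A → ℝ)
    (hfixold : T πold Qold = Qold) (hfixnew : T πnew Qnew = Qnew)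
    (hgreedy : ∀ s, (⨅ b, ∑ a, πnew s a * Qold s a b) =
      ⨆ π : {π : S → A → ℝ // ∀ s, (∀ a, 0 ≤ π s a) ∧ ∑ a, π s a = 1},
        ⨅ b, ∑ a, (π : S → A → ℝ) s a * Qold s a b) :
    (∀ s a b, Qold s a b ≤ T πnew Qold s a b) ∧
    (∀ s a b, Filter.Tendsto (fun n => (T πnew)^[n] Qold s a b)
      Filter.atTop (nhds (Qnew s a b))) ∧
    (∀ s a b, Qold s a b ≤ Qnew s a b) := by
  obtain rfl : T = advBellman r p γ := by
    funext π Q s a b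
    exact hT π Q s a b
  have hcontr : ContractingWith γ.toNNReal (advBellman r p γ πnew) :=
    ⟨Real.toNNReal_lt_one.2 hγ1, lipschitzWith_advBellman hp0 hp1 hγ0 hπnew⟩
  have himprove : Qold ≤ advBellman r p γ πnew Qold :=
    hfixold.ge.trans <| advBellman_le_advBellman hp0 hγ0 fun s =>
      (worstCaseValue_le_iSup hπold Qold s).trans_eq (hgreedy s).symm
  have htend : Tendsto (fun n => (advBellman r p γ πnew)^[n] Qold) atTop (𝓝 Qnew) :=
    hcontr.fixedPoint_unique hfixnew ▸ hcontr.tendsto_iterate_fixedPoint Qold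
  have hle : Qold ≤ Qnew := ge_of_tendsto' htend fun n =>
    (advBellman_mono hp0 hγ0 fun s => (hπnew s).1).monotone_iterate_of_le_map himprove
      (Nat.zero_le n)
  exact ⟨fun s a b => himprove s a b,
    fun s a b => tendsto_pi_nhds.1 (tendsto_pi_nhds.1 (tendsto_pi_nhds.1 htend s) a) b,
    fun s a b => hle s a b⟩

/-- **Theorem 2 (Policy Improvement) of the A2P paper.**
With `T π Q (s,a,b) = r_ε(s,a,b) + γ Σ_{s'} p_ε(s'|s,a,b)·(⨅ b', Σ_{a'} π(a'|s') Q(s',a',b'))`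
for finite state/action sets, if `π_new` is greedy for `Q^{π_old}`, i.e.
`⨅ b, E_{a∼π_new}[Q^{π_old}(s,a,b)] = max_{π∈Π} ⨅ b, E_{a∼π}[Q^{π_old}(s,a,b)]` for all `s`,
then `T π_new Q^{π_old} ≥ T π_old Q^{π_old} = Q^{π_old}` pointwise, and
`Q^{π_new} = lim_n (T π_new)ⁿ Q^{π_old} ≥ Q^{π_old}` pointwise. -/
theorem a2p_policy_improvement
    {S A : Type*} [Fintype S] [Fintype A] [Nonempty S] [Nonempty A]
    (r : S → A → A → ℝ) (p : S → A → A → S → ℝ)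
    (hp0 : ∀ s a b s', 0 ≤ p s a b s') (hp1 : ∀ s a b, ∑ s', p s a b s' = 1)
    (γ : ℝ) (hγ0 : 0 ≤ γ) (hγ1 : γ < 1)
    (T : (S → A → ℝ) → (S → A → A → ℝ) → (S → A → A → ℝ))
    (hT : ∀ (π : S → A → ℝ) (Q : S → A → A → ℝ) (s : S) (a b : A),
      T π Q s a b = r s a b +
        γ * ∑ s', p s a b s' * ⨅ b', ∑ a', π s' a' * Q s' a' b')
    (πold πnew : S → A → ℝ)
    (hπold : ∀ s, (∀ a, 0 ≤ πold s a) ∧ ∑ a, πold s a = 1)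
    (hπnew : ∀ s, (∀ a, 0 ≤ πnew s a) ∧ ∑ a, πnew s a = 1)
    (Qold Qnew : S → A → A → ℝ)
    (hfixold : T πold Qold = Qold) (hfixnew : T πnew Qnew = Qnew)
    (hgreedy : ∀ s, (⨅ b, ∑ a, πnew s a * Qold s a b) =
      ⨆ π : {π : S → A → ℝ // ∀ s, (∀ a, 0 ≤ π s a) ∧ ∑ a, π s a = 1},
        ⨅ b, ∑ a, (π : S → A → ℝ) s a * Qold s a b) :
    (∀ s a b, Qold s a b ≤ T πnew Qold s a b) ∧
    (∀ s a b, Filter.Tendsto (fun n => (T πnew)^[n] Qold s a b)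
      Filter.atTop (nhds (Qnew s a b))) ∧
    (∀ s a b, Qold s a b ≤ Qnew s a b) :=
  a2p_policy_improvement_general r p hp0 hp1 γ hγ0 hγ1 T hT πold πnew hπold hπnew Qold Qnew hfixold
    hfixnew hgreedy
end

section
/- Fix bounded reward r, discount γ ∈ [0,1), and policies π, π̄. If r(s,·) is L-Lipschitz in the action for every s and the transition kernel does not depend on the action (i.e., p(·|s,a) = p(·|s)), then the fixed points Q_ε and Q_{ε'} of the adaptive adversarial Bellman operators with coefficients ε and ε' satisfy ‖Q_ε − Q_{ε'}‖_∞ ≤ (L·D/(1−γ))·|ε − ε'|, where D = sup_{a,ā∈A} ‖a − ā‖. -/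
open MeasureTheory

lemma inf_abs_sub_le {α : Type*} (G H : α → ℝ) (δ : ℝ) (hδ : 0 ≤ δ)
    (hG : BddBelow (Set.range G)) (hH : BddBelow (Set.range H))
    (h : ∀ x, |G x - H x| ≤ δ) : |(⨅ x, G x) - ⨅ x, H x| ≤ δ := by
  rcases isEmpty_or_nonempty α with hα | hα
  · simp [Real.iInf_of_isEmpty, hδ]
  · rw [abs_sub_le_iff]
    constructor
    · have h1 : (⨅ y, G y) - δ ≤ ⨅ x, H x :=
        le_ciInf fun x => by
          have := (ciInf_le hG x).trans (by linarith [(abs_le.1 (h x)).2] : G x ≤ H x + δ)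
          linarith
      linarith
    · have h1 : (⨅ y, H y) - δ ≤ ⨅ x, G x :=
        le_ciInf fun x => by
          have := (ciInf_le hH x).trans (by linarith [(abs_le.1 (h x)).1] : H x ≤ G x + δ)
          linarith
      linarith

/-- **Lipschitz dependence of the A2P fixed point on the adversarial coefficient.**
With bounded convex action set `A` of diameter `D = diam A`, reward `L`-Lipschitz in the
action, action-independent transitions `p(·|s)`, and `γ ∈ [0,1)`, the fixed points `Q_ε`
and `Q_ε'` of the adaptive adversarial Bellman operators with coefficients `ε, ε' ∈ [0,1]`
satisfy `‖Q_ε − Q_ε'‖_∞ ≤ (L·D/(1−γ))·|ε − ε'|` over the action set. -/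
theorem a2p_fixed_point_lipschitz_in_epsilon
    {n : ℕ} {S : Type*} [MeasurableSpace S]
    (A : Set (EuclideanSpace ℝ (Fin n))) (hconv : Convex ℝ A)
    (hAbdd : Bornology.IsBounded A) (hAne : A.Nonempty)
    (r : S → EuclideanSpace ℝ (Fin n) → ℝ) (L : ℝ) (hL : 0 ≤ L)
    (hLip : ∀ s, ∀ a₁ ∈ A, ∀ a₂ ∈ A, |r s a₁ - r s a₂| ≤ L * ‖a₁ - a₂‖)
    (γ : ℝ) (hγ0 : 0 ≤ γ) (hγ1 : γ < 1)
    (p : S → Measure S) (hp : ∀ s, IsProbabilityMeasure (p s))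
    (π : S → Measure (EuclideanSpace ℝ (Fin n)))
    (hπ : ∀ s, IsProbabilityMeasure (π s))
    -- the policy only selects actions from the action set `A`
    (hπA : ∀ s, (π s) Aᶜ = 0)
    (B : ℝ → (S → EuclideanSpace ℝ (Fin n) → EuclideanSpace ℝ (Fin n) → ℝ) →
      S → EuclideanSpace ℝ (Fin n) → EuclideanSpace ℝ (Fin n) → ℝ)
    (hB : ∀ ε Q s a b, B ε Q s a b =
      r s ((1 - ε) • a + ε • b) +
        γ * ∫ s', (⨅ b' ∈ A, ∫ a', Q s' a' b' ∂(π s')) ∂(p s))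
    (ε ε' : ℝ) (hε0 : 0 ≤ ε) (hε1 : ε ≤ 1) (hε'0 : 0 ≤ ε') (hε'1 : ε' ≤ 1)
    (Qε Qε' : S → EuclideanSpace ℝ (Fin n) → EuclideanSpace ℝ (Fin n) → ℝ)
    (hQεbdd : ∃ M, ∀ s a b, |Qε s a b| ≤ M)
    (hQε'bdd : ∃ M, ∀ s a b, |Qε' s a b| ≤ M)
    (hintε : ∀ s b, Integrable (fun a => Qε s a b) (π s))
    (hintε' : ∀ s b, Integrable (fun a => Qε' s a b) (π s))
    (hintε2 : ∀ s, Integrable (fun s' => ⨅ b' ∈ A, ∫ a', Qε s' a' b' ∂(π s')) (p s))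
    (hintε'2 : ∀ s, Integrable (fun s' => ⨅ b' ∈ A, ∫ a', Qε' s' a' b' ∂(π s')) (p s))
    (hfixε : ∀ s a b, B ε Qε s a b = Qε s a b)
    (hfixε' : ∀ s a b, B ε' Qε' s a b = Qε' s a b) :
    ∀ s, ∀ a ∈ A, ∀ b ∈ A,
      |Qε s a b - Qε' s a b| ≤ L * Metric.diam A / (1 - γ) * |ε - ε'| := by
  intro s a ha b hb
  obtain ⟨M, hM⟩ := hQεbdd
  obtain ⟨M', hM'⟩ := hQε'bdd
  set D := Metric.diam A with hD
  have hD0 : 0 ≤ D := Metric.diam_nonneg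
  set K := L * D * |ε - ε'| with hK
  set T : Set ℝ :=
    {x | ∃ s₀ a₀ b₀, a₀ ∈ A ∧ b₀ ∈ A ∧ x = |Qε s₀ a₀ b₀ - Qε' s₀ a₀ b₀|} with hT
  have hmem : |Qε s a b - Qε' s a b| ∈ T := ⟨s, a, b, ha, hb, rfl⟩
  have hTne : T.Nonempty := ⟨_, hmem⟩
  have hTbdd : BddAbove T := by
    refine ⟨M + M', ?_⟩
    rintro x ⟨s₀, a₀, b₀, -, -, rfl⟩
    calc |Qε s₀ a₀ b₀ - Qε' s₀ a₀ b₀| ≤ |Qε s₀ a₀ b₀| + |Qε' s₀ a₀ b₀| := by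
          rw [sub_eq_add_neg]; exact (abs_add_le _ _).trans (by rw [abs_neg])
      _ ≤ M + M' := add_le_add (hM _ _ _) (hM' _ _ _)
  set δ := sSup T with hδdef
  have hδ0 : 0 ≤ δ := (abs_nonneg _).trans (le_csSup hTbdd hmem)
  -- inner integral bound
  have hinner : ∀ s' b', b' ∈ A →
      |(∫ a', Qε s' a' b' ∂(π s')) - ∫ a', Qε' s' a' b' ∂(π s')| ≤ δ := by
    intro s' b' hb'
    haveI := hπ s'
    rw [← integral_sub (hintε s' b') (hintε' s' b')]
    have hae : ∀ᵐ a' ∂(π s'), ‖Qε s' a' b' - Qε' s' a' b'‖ ≤ δ := by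
      have hmemA : ∀ᵐ a' ∂(π s'), a' ∈ A := by
        rw [ae_iff]; simpa [Set.compl_def] using hπA s'
      filter_upwards [hmemA] with a' ha'
      exact le_csSup hTbdd ⟨s', a', b', ha', hb', rfl⟩
    have := norm_integral_le_of_norm_le_const hae
    simpa [Real.norm_eq_abs, measure_univ] using this
  -- lower bounds for the inf functions
  have hGbdd : ∀ (Q : S → EuclideanSpace ℝ (Fin n) → EuclideanSpace ℝ (Fin n) → ℝ)
      (MQ : ℝ), (∀ s a b, |Q s a b| ≤ MQ) →
      (∀ s b, Integrable (fun a => Q s a b) (π s)) →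
      ∀ s', BddBelow (Set.range fun b' =>
        ⨅ (_ : b' ∈ A), ∫ a', Q s' a' b' ∂(π s')) := by
    intro Q MQ hMQ hint s'
    haveI := hπ s'
    refine ⟨-|MQ|, ?_⟩
    rintro x ⟨b', rfl⟩
    dsimp only
    by_cases hb' : b' ∈ A
    · rw [ciInf_pos hb']
      have h1 : -MQ ≤ ∫ a', Q s' a' b' ∂(π s') := by
        have := integral_mono (integrable_const (-MQ)) (hint s' b')
          (fun a' => (abs_le.1 (hMQ s' a' b')).1)
        simpa [measure_univ] using this
      have : -|MQ| ≤ -MQ := neg_le_neg (le_abs_self _)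
      linarith
    · haveI : IsEmpty (b' ∈ A) := ⟨hb'⟩
      rw [Real.iInf_of_isEmpty]
      simp [neg_nonpos, abs_nonneg]
  -- bound on the difference of infima
  have hinf : ∀ s',
      |(⨅ b' ∈ A, ∫ a', Qε s' a' b' ∂(π s')) -
        ⨅ b' ∈ A, ∫ a', Qε' s' a' b' ∂(π s')| ≤ δ := by
    intro s'
    refine inf_abs_sub_le _ _ δ hδ0 (hGbdd Qε M hM hintε s') (hGbdd Qε' M' hM' hintε' s') ?_
    intro b'
    by_cases hb' : b' ∈ A
    · rw [ciInf_pos hb', ciInf_pos hb']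
      exact hinner s' b' hb'
    · haveI : IsEmpty (b' ∈ A) := ⟨hb'⟩
      rw [Real.iInf_of_isEmpty, Real.iInf_of_isEmpty]
      simpa using hδ0
  -- bound on the difference of outer integrals
  have houter : ∀ s₀,
      |(∫ s', (⨅ b' ∈ A, ∫ a', Qε s' a' b' ∂(π s')) ∂(p s₀)) -
        ∫ s', (⨅ b' ∈ A, ∫ a', Qε' s' a' b' ∂(π s')) ∂(p s₀)| ≤ δ := by
    intro s₀
    haveI := hp s₀
    rw [← integral_sub (hintε2 s₀) (hintε'2 s₀)]
    have hae : ∀ᵐ s' ∂(p s₀), ‖(⨅ b' ∈ A, ∫ a', Qε s' a' b' ∂(π s')) -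
        ⨅ b' ∈ A, ∫ a', Qε' s' a' b' ∂(π s')‖ ≤ δ :=
      Filter.Eventually.of_forall fun s' => by simpa [Real.norm_eq_abs] using hinf s'
    have := norm_integral_le_of_norm_le_const hae
    simpa [Real.norm_eq_abs, measure_univ] using this
  -- the contraction step
  have hstep : ∀ x ∈ T, x ≤ K + γ * δ := by
    rintro x ⟨s₀, a₀, b₀, ha₀, hb₀, rfl⟩
    rw [← hfixε s₀ a₀ b₀, ← hfixε' s₀ a₀ b₀, hB, hB]
    set c := (1 - ε) • a₀ + ε • b₀ with hc
    set c' := (1 - ε') • a₀ + ε' • b₀ with hc'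
    have hcA : c ∈ A := hconv ha₀ hb₀ (by linarith) hε0 (by ring)
    have hc'A : c' ∈ A := hconv ha₀ hb₀ (by linarith) hε'0 (by ring)
    have h1 : |r s₀ c - r s₀ c'| ≤ K := by
      refine (hLip s₀ c hcA c' hc'A).trans ?_
      have hcc' : c - c' = (ε - ε') • (b₀ - a₀) := by rw [hc, hc']; module
      rw [hcc', norm_smul, Real.norm_eq_abs]
      have hba : ‖b₀ - a₀‖ ≤ D := by
        rw [← dist_eq_norm]; exact Metric.dist_le_diam_of_mem hAbdd hb₀ ha₀
      rw [hK]
      calc L * (|ε - ε'| * ‖b₀ - a₀‖) ≤ L * (|ε - ε'| * D) := by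
            exact mul_le_mul_of_nonneg_left
              (mul_le_mul_of_nonneg_left hba (abs_nonneg _)) hL
        _ = L * D * |ε - ε'| := by ring
    have h2 := houter s₀
    set Iε := ∫ s', (⨅ b' ∈ A, ∫ a', Qε s' a' b' ∂(π s')) ∂(p s₀)
    set Iε' := ∫ s', (⨅ b' ∈ A, ∫ a', Qε' s' a' b' ∂(π s')) ∂(p s₀)
    have heq : r s₀ c + γ * Iε - (r s₀ c' + γ * Iε') =
        (r s₀ c - r s₀ c') + γ * (Iε - Iε') := by ring
    rw [heq]
    refine (abs_add_le _ _).trans (add_le_add h1 ?_)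
    rw [abs_mul, abs_of_nonneg hγ0]
    exact mul_le_mul_of_nonneg_left h2 hγ0
  have hsup : δ ≤ K + γ * δ := csSup_le hTne hstep
  have hδle : δ ≤ K / (1 - γ) := by
    rw [le_div_iff₀ (by linarith)]
    nlinarith
  have hfin : L * D / (1 - γ) * |ε - ε'| = K / (1 - γ) := by rw [hK]; ring
  rw [hfin]
  exact (le_csSup hTbdd hmem).trans hδle
end
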